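/- arXiv:1310.0989 — 4 statements merged into one kernel-verified Lean document; each statement's English description precedes it below -/
import Mathlib

section
/- For n ≥ 1 and 1 ≤ k ≤ n, if k divides n, then for any real numbers β₁,…,βₙ with ∑βⱼ = 0, the number of k-element subsets e of [n] with ∑_{j∈e} βⱼ ≥ 0 is at least C(n-1, k-1). -/
open Finset

theorem stmt0 (n k : ℕ) (hn : 1 ≤ n) (hk : 1 ≤ k) (hkn : k ≤ n) (hdvd : k ∣ n)
    (β : Fin n → ℝ) (hβ : ∑ j, β j = 0) :
    (n - 1).choose (k - 1) ≤
      ((Finset.powersetCard k (Finset.univ : Finset (Fin n))).filter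
        (fun e => 0 ≤ ∑ j ∈ e, β j)).card := by
  classical
  obtain ⟨m, hm⟩ := hdvd
  have hk0 : 0 < k := hk
  have hm0 : 0 < m := by
    rcases Nat.eq_zero_or_pos m with h | h
    · subst h; simp at hm; omega
    · exact h
  have hmk : m * k = n := by rw [Nat.mul_comm]; omega
  have hdiv : ∀ j : Fin n, j.val / k < m := by
    intro j
    rw [Nat.div_lt_iff_lt_mul hk0, hmk]
    exact j.isLt
  set g : Fin n → Fin m := fun j => ⟨j.val / k, hdiv j⟩ with hg
  set I : Fin m → Finset (Fin n) := fun i => univ.filter (fun j => g j = i) with hI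
  have hmem : ∀ (i : Fin m) (j : Fin n), j ∈ I i ↔ j.val / k = i.val := by
    intro i j
    simp only [hI, mem_filter, mem_univ, true_and, hg, Fin.ext_iff]
  have hlt : ∀ (i : Fin m) (t : Fin k), i.val * k + t.val < n := by
    intro i t
    have h1 : i.val * k + t.val < (i.val + 1) * k := by
      have := t.isLt; ring_nf; omega
    have h2 : (i.val + 1) * k ≤ m * k := Nat.mul_le_mul_right _ i.isLt
    omega
  -- each block has k elements
  have hcard : ∀ i, (I i).card = k := by
    intro i
    have : (I i).card = (univ : Finset (Fin k)).card := by
      apply Finset.card_bij' (fun j _ => (⟨j.val % k, Nat.mod_lt _ hk0⟩ : Fin k))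
        (fun t _ => (⟨i.val * k + t.val, hlt i t⟩ : Fin n))
      · intro j _; exact mem_univ _
      · intro t _
        rw [hmem]
        show (i.val * k + t.val) / k = i.val
        rw [Nat.add_comm, Nat.add_mul_div_right _ _ hk0, Nat.div_eq_of_lt t.isLt]
        omega
      · intro j hj
        rw [hmem] at hj
        apply Fin.ext
        show i.val * k + j.val % k = j.val
        rw [← hj, Nat.mul_comm, Nat.div_add_mod]
      · intro t _
        apply Fin.ext
        show (i.val * k + t.val) % k = t.val
        rw [Nat.add_comm, Nat.add_mul_mod_self_right, Nat.mod_eq_of_lt t.isLt]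
    simpa using this

  -- pigeonhole: every permutation has a nonnegative block
  have hex : ∀ σ : Equiv.Perm (Fin n), ∃ i, 0 ≤ ∑ j ∈ (I i).image σ, β j := by
    intro σ
    by_contra hcon
    push_neg at hcon
    have htot : ∑ i : Fin m, ∑ j ∈ (I i).image σ, β j = 0 := by
      have h1 : ∀ i, ∑ j ∈ (I i).image σ, β j = ∑ j ∈ I i, β (σ j) := by
        intro i
        rw [Finset.sum_image (fun a _ b _ h => σ.injective h)]
      simp_rw [h1, hI]
      rw [Finset.sum_fiberwise]
      rw [Equiv.sum_comp σ β]
      exact hβ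
    have : ∑ i : Fin m, ∑ j ∈ (I i).image σ, β j < 0 :=
      Finset.sum_neg (fun i _ => hcon i) (univ_nonempty_iff.mpr ⟨⟨0, hm0⟩⟩)
    linarith
  set f : Equiv.Perm (Fin n) → Finset (Fin n) :=
    fun σ => (I (Classical.choose (hex σ))).image σ with hf
  have hfmem : ∀ σ, f σ ∈ ((Finset.powersetCard k (Finset.univ : Finset (Fin n))).filter
      (fun e => 0 ≤ ∑ j ∈ e, β j)) := by
    intro σ
    rw [mem_filter, mem_powersetCard]
    refine ⟨⟨subset_univ _, ?_⟩, Classical.choose_spec (hex σ)⟩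
    rw [card_image_of_injective _ σ.injective, hcard]

  -- fiber bound for a single block index
  have hfiber : ∀ (i : Fin m) (S : Finset (Fin n)), S.card = k →
      (univ.filter (fun σ : Equiv.Perm (Fin n) => (I i).image σ = S)).card ≤
        k.factorial * (n - k).factorial := by
    intro i S hS
    have hcards : Fintype.card ↥(I i) = Fintype.card ↥S := by
      simp [Fintype.card_coe, hcard, hS]
    have hcardsc : Fintype.card ↥((I i)ᶜ : Finset (Fin n)) = Fintype.card ↥(Sᶜ : Finset (Fin n)) := by
      simp [Fintype.card_coe, Finset.card_compl, hcard, hS]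
    haveI hne1 : Nonempty (↥(I i) ↪ ↥S) := (Fintype.card_eq.mp hcards).map Equiv.toEmbedding
    haveI hne2 : Nonempty (↥((I i)ᶜ : Finset (Fin n)) ↪ ↥(Sᶜ : Finset (Fin n))) :=
      (Fintype.card_eq.mp hcardsc).map Equiv.toEmbedding
    have hle : (univ.filter (fun σ : Equiv.Perm (Fin n) => (I i).image σ = S)).card ≤
        (univ : Finset ((↥(I i) ↪ ↥S) × (↥((I i)ᶜ : Finset (Fin n)) ↪ ↥(Sᶜ : Finset (Fin n))))).card := by
      set F : Equiv.Perm (Fin n) →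
          ((↥(I i) ↪ ↥S) × (↥((I i)ᶜ : Finset (Fin n)) ↪ ↥(Sᶜ : Finset (Fin n)))) := fun σ =>
        if h : (I i).image σ = S then
          (⟨fun x => ⟨σ x.1, h ▸ mem_image_of_mem _ x.2⟩,
            fun a b hab => Subtype.ext (σ.injective (congrArg Subtype.val hab))⟩,
          ⟨fun x => ⟨σ x.1, by
              have hx := x.2
              rw [Finset.mem_compl] at hx ⊢
              intro hmem
              rw [← h, mem_image] at hmem
              obtain ⟨y, hy, hxy⟩ := hmem
              exact hx (σ.injective hxy ▸ hy)⟩,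
            fun a b hab => Subtype.ext (σ.injective (congrArg Subtype.val hab))⟩)
        else Classical.arbitrary _ with hF
      apply Finset.card_le_card_of_injOn F
      · intro σ _; exact mem_univ _
      · intro σ hσ τ hτ heq
        simp only [hF] at heq
        rw [mem_coe, mem_filter] at hσ hτ
        rw [dif_pos hσ.2, dif_pos hτ.2] at heq
        have h1 := congrArg Prod.fst heq
        have h2 := congrArg Prod.snd heq
        apply Equiv.ext
        intro x
        by_cases hx : x ∈ I i
        · exact congrArg (fun e => ((e : ↥(I i) ↪ ↥S) ⟨x, hx⟩ : ↥S).val) h1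
        · have hx' : x ∈ ((I i)ᶜ : Finset (Fin n)) := Finset.mem_compl.mpr hx
          exact congrArg (fun e => ((e : ↥((I i)ᶜ : Finset (Fin n)) ↪ ↥(Sᶜ : Finset (Fin n))) ⟨x, hx'⟩ : ↥(Sᶜ : Finset (Fin n))).val) h2
    refine hle.trans ?_
    rw [Finset.card_univ, Fintype.card_prod, Fintype.card_embedding_eq,
      Fintype.card_embedding_eq]
    simp only [Fintype.card_coe, hcard, hS, Finset.card_compl, Fintype.card_fin]
    rw [Nat.descFactorial_self, Nat.descFactorial_self]

  -- double counting
  set B : ℕ := m * (k.factorial * (n - k).factorial) with hB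
  set N := ((Finset.powersetCard k (Finset.univ : Finset (Fin n))).filter
        (fun e => 0 ≤ ∑ j ∈ e, β j)).card with hN
  have hcount : n.factorial ≤ B * N := by
    have h1 : (univ : Finset (Equiv.Perm (Fin n))).card ≤
        B * ((univ : Finset (Equiv.Perm (Fin n))).image f).card := by
      apply Finset.card_le_mul_card_image
      intro S hSmem
      obtain ⟨σ0, _, hσ0⟩ := Finset.mem_image.mp hSmem
      have hSk : S.card = k := by
        have := hfmem σ0
        rw [mem_filter, mem_powersetCard] at this
        rw [← hσ0]; exact this.1.2
      have hsub : (univ.filter (fun σ : Equiv.Perm (Fin n) => f σ = S)) ⊆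
          univ.biUnion (fun i : Fin m =>
            univ.filter (fun σ : Equiv.Perm (Fin n) => (I i).image σ = S)) := by
        intro σ hσ
        rw [mem_filter] at hσ
        rw [mem_biUnion]
        exact ⟨Classical.choose (hex σ), mem_univ _, by
          rw [mem_filter]; exact ⟨mem_univ _, hσ.2⟩⟩
      calc (univ.filter (fun σ : Equiv.Perm (Fin n) => f σ = S)).card
          ≤ (univ.biUnion (fun i : Fin m =>
            univ.filter (fun σ : Equiv.Perm (Fin n) => (I i).image σ = S))).card :=
            Finset.card_le_card hsub
        _ ≤ ∑ i : Fin m, (univ.filter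
            (fun σ : Equiv.Perm (Fin n) => (I i).image σ = S)).card :=
            Finset.card_biUnion_le
        _ ≤ ∑ _i : Fin m, k.factorial * (n - k).factorial :=
            Finset.sum_le_sum (fun i _ => hfiber i S hSk)
        _ = B := by rw [Finset.sum_const, card_univ, Fintype.card_fin, smul_eq_mul, hB]
    have h2 : ((univ : Finset (Equiv.Perm (Fin n))).image f).card ≤ N := by
      apply Finset.card_le_card
      intro S hS
      obtain ⟨σ0, _, hσ0⟩ := Finset.mem_image.mp hS
      rw [← hσ0]; exact hfmem σ0
    have h3 : (univ : Finset (Equiv.Perm (Fin n))).card = n.factorial := by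
      rw [card_univ, Fintype.card_perm, Fintype.card_fin]
    calc n.factorial = (univ : Finset (Equiv.Perm (Fin n))).card := h3.symm
      _ ≤ B * ((univ : Finset (Equiv.Perm (Fin n))).image f).card := h1
      _ ≤ B * N := Nat.mul_le_mul_left _ h2
  -- arithmetic identity
  have key : (n - 1).choose (k - 1) * ((k - 1).factorial * (n - k).factorial)
      = (n - 1).factorial := by
    have := Nat.choose_mul_factorial_mul_factorial (show k - 1 ≤ n - 1 by omega)
    have hnk : n - 1 - (k - 1) = n - k := by omega
    rw [hnk] at this
    linarith [this]
  have hkfac : k.factorial = k * (k - 1).factorial := by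
    conv_lhs => rw [show k = (k - 1) + 1 by omega]
    rw [Nat.factorial_succ]
    congr 1; omega
  have hnfac : n.factorial = n * (n - 1).factorial := by
    conv_lhs => rw [show n = (n - 1) + 1 by omega]
    rw [Nat.factorial_succ]
    congr 1; omega
  have hid : (n - 1).choose (k - 1) * B = n.factorial := by
    calc (n - 1).choose (k - 1) * B
        = (n - 1).choose (k - 1) * (m * ((k * (k - 1).factorial) * (n - k).factorial)) := by
          rw [hB, hkfac]
      _ = (m * k) * ((n - 1).choose (k - 1) * ((k - 1).factorial * (n - k).factorial)) := by
          ring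
      _ = n * (n - 1).factorial := by rw [hmk, key]
      _ = n.factorial := hnfac.symm
  have hBpos : 0 < B := by
    rw [hB]
    exact Nat.mul_pos hm0 (Nat.mul_pos k.factorial_pos (n - k).factorial_pos)
  have : (n - 1).choose (k - 1) * B ≤ N * B := by
    rw [hid, Nat.mul_comm N B]; exact hcount
  exact Nat.le_of_mul_le_mul_right this hBpos
end

section
/- Suppose γ₁,…,γ_{n-1} ≥ 0, ∑γⱼ = 1, and for some x⁰ ∈ C([n],k) (viewed as a 0/1 vector on the first n−1 coordinates) we have ∑_{j=1}^{n-1} γⱼ x⁰ⱼ = k/n. Then for every ε > 0 there exists γ' with γ'ⱼ ≥ 0, ∑γ'ⱼ = 1, |γ' − γ| < ε, such that ∑γ'ⱼ x⁰ⱼ > k/n and ∑γ'ⱼ xⱼ > k/n for every x ∈ C([n],k) with ∑γⱼxⱼ > k/n. -/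
/-!
Move `γ` a small step `t` towards the point mass at a coordinate `j₀ < n - 1` of `x⁰`, which
exists because `x⁰` has positive `γ`-weight `k / n`. The `x⁰`-weight becomes
`(1 - t) k / n + t > k / n`, and since only the finitely many sets `x ⊆ [n]` matter, every strict
inequality `∑ γⱼ xⱼ > k / n` survives a small enough step.
-/

open Filter Topology Finset

section ConvexPerturbation

variable {ι : Type*} (γ u : ι → ℝ) (s : Finset ι)

theorem sum_convexComb_mul (c : ι → ℝ) (t : ℝ) :
    ∑ j ∈ s, ((1 - t) * γ j + t * u j) * c j
      = (1 - t) * ∑ j ∈ s, γ j * c j + t * ∑ j ∈ s, u j * c j := by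
  simp only [mul_sum, ← sum_add_distrib]
  exact sum_congr rfl fun _ _ => by ring

theorem tendsto_sum_convexComb_mul (c : ι → ℝ) :
    Tendsto (fun t : ℝ => ∑ j ∈ s, ((1 - t) * γ j + t * u j) * c j) (𝓝 0)
      (𝓝 (∑ j ∈ s, γ j * c j)) := by
  have hcont : Continuous fun t : ℝ => ∑ j ∈ s, ((1 - t) * γ j + t * u j) * c j := by
    fun_prop
  simpa using hcont.tendsto 0

theorem eventually_abs_convexComb_sub_lt (j : ι) {ε : ℝ} (hε : 0 < ε) :
    ∀ᶠ t in 𝓝 (0 : ℝ), |(1 - t) * γ j + t * u j - γ j| < ε := by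
  have hcont : Continuous fun t : ℝ => |(1 - t) * γ j + t * u j - γ j| := by fun_prop
  exact (hcont.tendsto 0).eventually_lt_const (by simpa using hε)

theorem eventually_forall_lt_sum_convexComb_mul {κ : Type*} (X : Finset κ) (c : κ → ι → ℝ)
    (a : ℝ) :
    ∀ᶠ t in 𝓝 (0 : ℝ), ∀ x ∈ X,
      a < ∑ j ∈ s, γ j * c x j → a < ∑ j ∈ s, ((1 - t) * γ j + t * u j) * c x j := by
  refine (eventually_all_finset X).2 fun x _ => ?_
  by_cases hx : a < ∑ j ∈ s, γ j * c x j
  · exact ((tendsto_sum_convexComb_mul γ u s (c x)).eventually_const_lt hx).mono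
      fun _ h _ => h
  · exact Eventually.of_forall fun _ h => absurd h hx

end ConvexPerturbation

theorem exists_mem_of_sum_mul_indicator_ne_zero {ι : Type*} [DecidableEq ι] {s x : Finset ι}
    {γ : ι → ℝ} (h : ∑ j ∈ s, γ j * (if j ∈ x then (1 : ℝ) else 0) ≠ 0) :
    ∃ j ∈ s, j ∈ x := by
  obtain ⟨j, hj, hne⟩ := exists_ne_zero_of_sum_ne_zero h
  exact ⟨j, hj, by_contra fun h' => hne (by simp [h'])⟩

theorem sum_single_mul {ι : Type*} [DecidableEq ι] {s : Finset ι} {j₀ : ι} (h : j₀ ∈ s)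
    (c : ι → ℝ) : ∑ j ∈ s, (Pi.single j₀ 1 : ι → ℝ) j * c j = c j₀ := by
  simp [Pi.single_apply, h]

theorem stmt8_general (n k : ℕ) (hk : 1 ≤ k) (hkn : k < n) (γ : ℕ → ℝ)
    (hγ0 : ∀ j ∈ Finset.range (n - 1), 0 ≤ γ j)
    (hγ1 : ∑ j ∈ Finset.range (n - 1), γ j = 1)
    (x0 : Finset ℕ)
    (heq : ∑ j ∈ Finset.range (n - 1), γ j * (if j ∈ x0 then (1 : ℝ) else 0)
        = (k : ℝ) / n) :
    ∀ ε > (0 : ℝ), ∃ γ' : ℕ → ℝ,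
      (∀ j ∈ Finset.range (n - 1), 0 ≤ γ' j) ∧
      (∑ j ∈ Finset.range (n - 1), γ' j = 1) ∧
      (∀ j ∈ Finset.range (n - 1), |γ' j - γ j| < ε) ∧
      ((k : ℝ) / n < ∑ j ∈ Finset.range (n - 1), γ' j * (if j ∈ x0 then (1 : ℝ) else 0)) ∧
      ∀ x : Finset ℕ, x ⊆ Finset.range n → x.card = k →
        ((k : ℝ) / n < ∑ j ∈ Finset.range (n - 1), γ j * (if j ∈ x then (1 : ℝ) else 0)) →
        ((k : ℝ) / n < ∑ j ∈ Finset.range (n - 1), γ' j * (if j ∈ x then (1 : ℝ) else 0)) := by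
  intro ε hε
  have hn : (0 : ℝ) < n := by exact_mod_cast (show 0 < n by omega)
  have hkn' : (k : ℝ) / n < 1 := (div_lt_one hn).2 (by exact_mod_cast hkn)
  obtain ⟨j₀, hj₀, hj₀x0⟩ := exists_mem_of_sum_mul_indicator_ne_zero
    (heq ▸ (div_pos (by exact_mod_cast hk) hn).ne')
  set u : ℕ → ℝ := Pi.single j₀ 1
  have hsmall : ∀ᶠ t in 𝓝[>] (0 : ℝ), (0 < t ∧ t < 1) ∧
      (∀ j ∈ range (n - 1), |(1 - t) * γ j + t * u j - γ j| < ε) ∧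
      ∀ x ∈ (range n).powerset,
        (k : ℝ) / n < ∑ j ∈ range (n - 1), γ j * (if j ∈ x then 1 else 0) →
        (k : ℝ) / n <
          ∑ j ∈ range (n - 1), ((1 - t) * γ j + t * u j) * (if j ∈ x then 1 else 0) := by
    have hpos : ∀ᶠ t in 𝓝[>] (0 : ℝ), 0 < t := self_mem_nhdsWithin
    have hlt : ∀ᶠ t in 𝓝[>] (0 : ℝ), t < 1 := nhdsWithin_le_nhds (Iio_mem_nhds one_pos)
    have hclose := (eventually_all_finset (range (n - 1))).2 fun j _ =>
      eventually_abs_convexComb_sub_lt γ u j hε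
    have hkeep := eventually_forall_lt_sum_convexComb_mul γ u (range (n - 1)) (range n).powerset
      (fun x j => if j ∈ x then 1 else 0) ((k : ℝ) / n)
    exact (hpos.and hlt).and (nhdsWithin_le_nhds (hclose.and hkeep))
  obtain ⟨t, ⟨ht0, ht1⟩, hclose, hkeep⟩ := hsmall.exists
  refine ⟨fun j => (1 - t) * γ j + t * u j, fun j hj => ?_, ?_, hclose, ?_,
    fun x hx _ => hkeep x (mem_powerset.2 hx)⟩
  · have hu : 0 ≤ u j := by simp only [u, Pi.single_apply]; positivity
    exact add_nonneg (mul_nonneg (by linarith) (hγ0 j hj)) (mul_nonneg ht0.le hu)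
  · simpa [hγ1, u, hj₀] using sum_convexComb_mul γ u (range (n - 1)) 1 t
  · rw [sum_convexComb_mul, heq, sum_single_mul hj₀, if_pos hj₀x0]
    nlinarith

theorem stmt8 (n k : ℕ) (hk : 1 ≤ k) (hkn : k < n) (γ : ℕ → ℝ)
    (hγ0 : ∀ j ∈ Finset.range (n - 1), 0 ≤ γ j)
    (hγ1 : ∑ j ∈ Finset.range (n - 1), γ j = 1)
    (x0 : Finset ℕ) (hx0 : x0 ⊆ Finset.range n) (hx0c : x0.card = k)
    (heq : ∑ j ∈ Finset.range (n - 1), γ j * (if j ∈ x0 then (1 : ℝ) else 0)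
        = (k : ℝ) / n) :
    ∀ ε > (0 : ℝ), ∃ γ' : ℕ → ℝ,
      (∀ j ∈ Finset.range (n - 1), 0 ≤ γ' j) ∧
      (∑ j ∈ Finset.range (n - 1), γ' j = 1) ∧
      (∀ j ∈ Finset.range (n - 1), |γ' j - γ j| < ε) ∧
      ((k : ℝ) / n < ∑ j ∈ Finset.range (n - 1), γ' j * (if j ∈ x0 then (1 : ℝ) else 0)) ∧
      ∀ x : Finset ℕ, x ⊆ Finset.range n → x.card = k →
        ((k : ℝ) / n < ∑ j ∈ Finset.range (n - 1), γ j * (if j ∈ x then (1 : ℝ) else 0)) →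
        ((k : ℝ) / n < ∑ j ∈ Finset.range (n - 1), γ' j * (if j ∈ x then (1 : ℝ) else 0)) :=
  stmt8_general n k hk hkn γ hγ0 hγ1 x0 heq
end

section
/- For integers 0 ≤ i ≤ ka/n with 1 ≤ k < n, 1 ≤ a < n, k−i ≤ n−a, the entropy bound holds: (n−a)·H((k−i)/(n−a)) − n·H(k/n) ≤ i·ln(k/n) + (a−i)·ln(1 − k/n), where H(p) = −p ln p − (1−p) ln(1−p) is the natural-log binary entropy. -/
/-- Natural-log binary entropy. -/
noncomputable def binEnt (p : ℝ) : ℝ := -p * Real.log p - (1 - p) * Real.log (1 - p)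

lemma key_aux (x y : ℝ) (hx : 0 < x) (hy : 0 ≤ y) :
    -y * Real.log y + y * Real.log x ≤ x - y := by
  rcases hy.eq_or_lt with h | h
  · simp [← h]; linarith
  · have h1 := Real.log_le_sub_one_of_pos (div_pos hx h)
    rw [Real.log_div hx.ne' h.ne'] at h1
    have h2 := mul_le_mul_of_nonneg_left h1 h.le
    have h3 : y * (x / y - 1) = x - y := by field_simp
    nlinarith

lemma crossEnt (p q : ℝ) (hp0 : 0 < p) (hp1 : p < 1) (hq0 : 0 ≤ q) (hq1 : q ≤ 1) :
    binEnt q ≤ -q * Real.log p - (1 - q) * Real.log (1 - p) := by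
  have h1 := key_aux p q hp0 hq0
  have h2 := key_aux (1 - p) (1 - q) (by linarith) (by linarith)
  unfold binEnt
  linarith

theorem stmt13 (n k a i : ℕ) (hk : 1 ≤ k) (hkn : k < n) (ha : 1 ≤ a) (han : a < n)
    (hki : k - i ≤ n - a) (hi : n * i ≤ k * a) :
    ((n : ℝ) - a) * binEnt (((k : ℝ) - i) / ((n : ℝ) - a)) - n * binEnt ((k : ℝ) / n)
      ≤ i * Real.log ((k : ℝ) / n) + ((a : ℝ) - i) * Real.log (1 - (k : ℝ) / n) := by
  have hik : i < k := by nlinarith [hi, han, hk, hkn]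
  have hn0 : (0:ℝ) < n := by exact_mod_cast (by omega : 0 < n)
  have hm : (0:ℝ) < (n:ℝ) - a := by
    have : (a:ℝ) < n := by exact_mod_cast han
    linarith
  have hki' : (k:ℝ) - i ≤ (n:ℝ) - a := by
    have h1 : ((k - i : ℕ) : ℝ) ≤ ((n - a : ℕ) : ℝ) := by exact_mod_cast hki
    rw [Nat.cast_sub hik.le, Nat.cast_sub han.le] at h1
    exact h1
  have hki0 : (0:ℝ) ≤ (k:ℝ) - i := by
    have : (i:ℝ) < k := by exact_mod_cast hik
    linarith
  set p : ℝ := (k:ℝ) / n with hp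
  set q : ℝ := ((k:ℝ) - i) / ((n:ℝ) - a) with hq
  have hp0 : 0 < p := by positivity
  have hp1 : p < 1 := (div_lt_one hn0).mpr (by exact_mod_cast hkn)
  have hq0 : 0 ≤ q := div_nonneg hki0 hm.le
  have hq1 : q ≤ 1 := (div_le_one hm).mpr hki'
  have step := crossEnt p q hp0 hp1 hq0 hq1
  have step2 : ((n:ℝ) - a) * binEnt q ≤
      ((n:ℝ) - a) * (-q * Real.log p - (1 - q) * Real.log (1 - p)) :=
    mul_le_mul_of_nonneg_left step hm.le
  have eqn : ((n:ℝ) - a) * (-q * Real.log p - (1 - q) * Real.log (1 - p))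
      - n * binEnt p
      = i * Real.log p + ((a:ℝ) - i) * Real.log (1 - p) := by
    unfold binEnt
    generalize Real.log p = L
    generalize Real.log (1 - p) = M
    generalize Real.log q = X
    generalize Real.log (1 - q) = Y
    rw [hq, hp]
    field_simp
    ring
  linarith
end

section
/- If for all weights β ∈ ℝⁿ with ∑βⱼ = 0 the number of k-subsets e of [n] with ∑_{j∈e}βⱼ ≥ 0 is at least C(n−1,k−1), then for all weights β' ∈ ℝ^{n+k} with ∑β'ⱼ = 0 the number of k-subsets e of [n+k] with ∑_{j∈e}β'ⱼ ≥ 0 is at least C(n+k−1,k−1). -/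
/-
Call a `k`-set nonnegative or negative according to the sign of its weight. The complement of a
negative `k`-set `A ⊆ [n + k]` has `n` points and nonnegative total weight; lowering these weights
by their mean makes them sum to zero, so by hypothesis at least `C(n-1, k-1)` of its `k`-subsets are
nonnegative for the lowered, hence for the original weights, and all of them are disjoint from `A`.
A nonnegative `k`-set is disjoint from at most `C(n, k)` negative ones. Double counting the disjoint
(negative, nonnegative) pairs gives `#neg · C(n-1, k-1) ≤ #nonneg · C(n, k)`, which together with
`#neg + #nonneg = C(n+k, k)` is equivalent to `#nonneg ≥ C(n+k-1, k-1)`.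
-/

open Finset

section NonnegSets

variable {α γ : Type*}

noncomputable def nonnegSets (s : Finset α) (k : ℕ) (β : α → ℝ) : Finset (Finset α) :=
  (s.powersetCard k).filter (fun e => 0 ≤ ∑ j ∈ e, β j)

lemma mem_nonnegSets {s e : Finset α} {k : ℕ} {β : α → ℝ} :
    e ∈ nonnegSets s k β ↔ e ⊆ s ∧ #e = k ∧ 0 ≤ ∑ j ∈ e, β j := by
  simp only [nonnegSets, mem_filter, mem_powersetCard, and_assoc]

lemma nonnegSets_mono {s : Finset α} {k : ℕ} {β β' : α → ℝ} (h : β ≤ β') :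
    nonnegSets s k β ⊆ nonnegSets s k β' :=
  monotone_filter_right _ fun _ _ he => he.trans (sum_le_sum fun j _ => h j)

lemma card_nonnegSets_map (f : α ↪ γ) (s : Finset α) (k : ℕ) (β : γ → ℝ) :
    #(nonnegSets (s.map f) k β) = #(nonnegSets s k (β ∘ f)) := by
  rw [nonnegSets, powersetCard_map, filter_map, card_map]
  simp only [nonnegSets, Function.comp_def, RelEmbedding.coe_toEmbedding, mapEmbedding_apply,
    sum_map]

lemma exists_map_univ_eq {n : ℕ} {s : Finset α} (hs : #s = n) :
    ∃ f : Fin n ↪ α, univ.map f = s := by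
  subst hs
  refine ⟨s.equivFin.symm.toEmbedding.trans (Function.Embedding.subtype _), ?_⟩
  rw [← map_map, map_univ_equiv, univ_eq_attach, attach_map_val]

lemma sum_sub_mean (s : Finset α) (β : α → ℝ) :
    ∑ j ∈ s, (β j - (∑ i ∈ s, β i) / #s) = 0 := by
  rcases s.eq_empty_or_nonempty with rfl | hs
  · simp
  · rw [sum_sub_distrib, sum_const, nsmul_eq_mul, mul_div_cancel₀ _ (by simp [hs.ne_empty]),
      sub_self]

lemma le_card_nonnegSets_of_card_eq {n k m : ℕ}
    (h : ∀ β : Fin n → ℝ, ∑ j, β j = 0 → m ≤ #(nonnegSets univ k β))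
    {s : Finset α} (hs : #s = n) {β : α → ℝ} (hβ : 0 ≤ ∑ j ∈ s, β j) :
    m ≤ #(nonnegSets s k β) := by
  obtain ⟨f, rfl⟩ := exists_map_univ_eq hs
  let c := (∑ i ∈ univ.map f, β i) / #(univ.map f)
  calc m ≤ #(nonnegSets univ k ((fun j => β j - c) ∘ f)) :=
        h _ ((sum_map univ f _).symm.trans (sum_sub_mean _ β))
    _ = #(nonnegSets (univ.map f) k fun j => β j - c) := (card_nonnegSets_map ..).symm
    _ ≤ #(nonnegSets (univ.map f) k β) :=
        card_le_card <| nonnegSets_mono fun j => sub_le_self _ (by positivity)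

variable [DecidableEq α]

lemma le_card_filter_disjoint_nonnegSets [Fintype α] {n k m : ℕ}
    (h : ∀ β : Fin n → ℝ, ∑ j, β j = 0 → m ≤ #(nonnegSets univ k β))
    {β : α → ℝ} (hβ : ∑ j, β j = 0) {A : Finset α} (hA : #Aᶜ = n) (hAβ : ∑ j ∈ A, β j ≤ 0) :
    m ≤ #((nonnegSets univ k β).filter (Disjoint A)) := by
  calc m ≤ #(nonnegSets Aᶜ k β) :=
        le_card_nonnegSets_of_card_eq h hA (by linarith [sum_add_sum_compl A β])
    _ ≤ _ := card_le_card fun e he => by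
        obtain ⟨heA, hek, he⟩ := mem_nonnegSets.1 he
        exact mem_filter.2 ⟨mem_nonnegSets.2 ⟨subset_univ e, hek, he⟩,
          disjoint_left.2 fun j hjA hje => mem_compl.1 (heA hje) hjA⟩

lemma card_filter_disjoint_le_choose [Fintype α] {𝒜 : Finset (Finset α)} {k : ℕ}
    (h𝒜 : (𝒜 : Set (Finset α)).Sized k) (e : Finset α) :
    #(𝒜.filter (Disjoint · e)) ≤ (Fintype.card α - #e).choose k := by
  calc #(𝒜.filter (Disjoint · e)) ≤ #(eᶜ.powersetCard k) := card_le_card fun A hA => by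
        obtain ⟨hA𝒜, hAe⟩ := mem_filter.1 hA
        exact mem_powersetCard.2 ⟨fun j hj => mem_compl.2 (disjoint_left.1 hAe hj), h𝒜 hA𝒜⟩
    _ = (Fintype.card α - #e).choose k := by rw [card_powersetCard, card_compl]

end NonnegSets

-- `c (a + b) = M a` for `a = C(n-1, k-1)`, `b = C(n, k)`, `c = C(n+k-1, k-1)`, `M = C(n+k, k)`,
-- written with `n = m + 1`, `k = j + 1`.
lemma Nat.choose_mul_add_choose_eq (m j : ℕ) :
    (m + j + 1).choose j * (m.choose j + (m + 1).choose (j + 1)) =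
      (m + j + 2).choose (j + 1) * m.choose j := by
  have h₁ := Nat.add_one_mul_choose_eq m j
  have h₂ := Nat.add_one_mul_choose_eq (m + j + 1) j
  refine Nat.eq_of_mul_eq_mul_left j.add_one_pos ?_
  linear_combination (m.choose j) * h₂ - ((m + j + 1).choose j) * h₁

lemma choose_pred_le_of_add_eq_choose {n k p q : ℕ} (hk : 1 ≤ k) (hkn : k ≤ n)
    (hpq : p + q = (n + k).choose k) (h : q * (n - 1).choose (k - 1) ≤ p * n.choose k) :
    (n + k - 1).choose (k - 1) ≤ p := by
  obtain ⟨j, rfl⟩ := Nat.exists_eq_add_of_le' hk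
  obtain ⟨m, rfl⟩ := Nat.exists_eq_add_of_le' (hk.trans hkn)
  simp only [Nat.add_sub_cancel, show m + 1 + (j + 1) = m + j + 2 by omega] at hpq h ⊢
  have hpos : 0 < m.choose j + (m + 1).choose (j + 1) :=
    Nat.add_pos_left (Nat.choose_pos (by omega)) _
  refine Nat.le_of_mul_le_mul_right ?_ hpos
  calc (m + j + 1).choose j * (m.choose j + (m + 1).choose (j + 1))
      = (p + q) * m.choose j := by rw [Nat.choose_mul_add_choose_eq, hpq]
    _ ≤ p * (m.choose j + (m + 1).choose (j + 1)) := by linarith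

theorem stmt16 (n k : ℕ) (hk : 1 ≤ k) (hkn : k ≤ n)
    (h : ∀ β : Fin n → ℝ, ∑ j, β j = 0 →
      (n - 1).choose (k - 1) ≤
        ((Finset.powersetCard k (Finset.univ : Finset (Fin n))).filter
          (fun e => 0 ≤ ∑ j ∈ e, β j)).card) :
    ∀ β' : Fin (n + k) → ℝ, ∑ j, β' j = 0 →
      (n + k - 1).choose (k - 1) ≤
        ((Finset.powersetCard k (Finset.univ : Finset (Fin (n + k)))).filter
          (fun e => 0 ≤ ∑ j ∈ e, β' j)).card := by
  intro β hβ
  set P := nonnegSets univ k β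
  set N := (powersetCard k univ).filter fun A => ¬ 0 ≤ ∑ j ∈ A, β j
  have hcard : #P + #N = (n + k).choose k := by
    refine (card_filter_add_card_filter_not _).trans ?_
    rw [card_powersetCard, card_univ, Fintype.card_fin]
  have hdouble : #N * (n - 1).choose (k - 1) ≤ #P * n.choose k := by
    refine card_mul_le_card_mul Disjoint (fun A hA => ?_) fun e he => ?_
    · obtain ⟨hAk, hAβ⟩ := mem_filter.1 hA
      refine le_card_filter_disjoint_nonnegSets h hβ ?_ (not_le.1 hAβ).le
      rw [card_compl, Fintype.card_fin, (mem_powersetCard.1 hAk).2, Nat.add_sub_cancel]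
    · have hN : (N : Set (Finset (Fin (n + k)))).Sized k := fun A hA =>
        (mem_powersetCard.1 (mem_filter.1 hA).1).2
      have hle := card_filter_disjoint_le_choose hN e
      rwa [Fintype.card_fin, (mem_nonnegSets.1 he).2.1, Nat.add_sub_cancel] at hle
  exact choose_pred_le_of_add_eq_choose hk hkn hcard hdouble
end
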